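/- arXiv:2303.00251 — 5 statements merged into one kernel-verified Lean document; each statement's English description precedes it below -/
import Mathlib

section
/- Let B ⊆ (ℕ → ℝ^d) be a shift-invariant behavior (σB = B) with lag at most ℓ. Let L > ℓ, let ŵ₁, ŵ₂ ∈ B|_L, and let l be an integer with ℓ ≤ l ≤ L such that the last l entries of ŵ₁ coincide with the first l entries of ŵ₂ (i.e. ŵ₁(L−l+j) = ŵ₂(j) for j = 0,…,l−1, 0-indexed). Then the concatenation of ŵ₁ with the last L−l entries of ŵ₂ is an element of B|_{2L−l}. -/
/-!
Extend `ŵ₁` and `ŵ₂` to trajectories of `B` and glue these along the overlap of length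
`l ≥ ℓ`. A window of length `ℓ + 1` of the glued trajectory either ends before the overlap
does, and is then a window of the first trajectory, or it starts inside the overlap (as
`l ≥ ℓ`), and is then a window of the second one. By shift invariance it is a window of `B`,
and the lag condition puts the glued trajectory in `B`.
-/

/-- The `L`-step restriction of a behavior `B ⊆ (ℕ → ℝ^d)`: the set of (ℕ-indexed
encodings of) length-`L` initial segments, i.e. functions agreeing with some
trajectory of `B` on the first `L` steps. -/
def restrict {α : Type*} (L : ℕ) (B : Set (ℕ → α)) : Set (ℕ → α) :=
  {v | ∃ w ∈ B, ∀ k < L, v k = w k}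

/-- The shift operator `(σw)(k) = w(k+1)`. -/
def shift {α : Type*} (w : ℕ → α) : ℕ → α := fun k => w (k + 1)

/-- `B` has lag at most `ℓ`: every trajectory all of whose windows of length `ℓ+1`
are windows of `B` belongs to `B`. -/
def hasLagAtMost {α : Type*} (B : Set (ℕ → α)) (ℓ : ℕ) : Prop :=
  ∀ w : ℕ → α, (∀ k : ℕ, (fun j => w (k + j)) ∈ restrict (ℓ + 1) B) → w ∈ B

variable {α : Type*}

lemma shift_iterate_apply (w : ℕ → α) (m k : ℕ) : shift^[m] w k = w (m + k) := by
  induction m generalizing k with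
  | zero => simp
  | succ m ih =>
    rw [Function.iterate_succ_apply']
    simp only [shift, ih]
    ac_rfl

lemma mem_restrict_of_window {B : Set (ℕ → α)} (hB : Set.MapsTo shift B B) {u v : ℕ → α}
    (hv : v ∈ B) {N m : ℕ} (huv : ∀ j < N, u j = v (m + j)) : u ∈ restrict N B :=
  ⟨shift^[m] v, hB.iterate m hv, fun j hj => (huv j hj).trans (shift_iterate_apply v m j).symm⟩

lemma glue_mem_of_hasLagAtMost {B : Set (ℕ → α)} {ℓ : ℕ} (hB : Set.MapsTo shift B B)
    (hlag : hasLagAtMost B ℓ) {v₁ v₂ : ℕ → α} (hv₁ : v₁ ∈ B) (hv₂ : v₂ ∈ B) {n l : ℕ}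
    (hl : ℓ ≤ l) (hmatch : ∀ j < l, v₁ (n + j) = v₂ j) :
    (fun k => if k < n + l then v₁ k else v₂ (k - n)) ∈ B := by
  refine hlag _ fun k => ?_
  by_cases hk : k + ℓ < n + l
  · refine mem_restrict_of_window hB hv₁ (m := k) fun j hj => ?_
    rw [if_pos (by omega)]
  · refine mem_restrict_of_window hB hv₂ (m := k - n) fun j hj => ?_
    split_ifs with hkj
    · rw [← hmatch _ (by omega)]
      congr 1
      omega
    · congr 1
      omega

theorem weaving_general {d : ℕ} (B : Set (ℕ → Fin d → ℝ)) (ℓ : ℕ)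
    (hshift : shift '' B = B) (hlag : hasLagAtMost B ℓ)
    (L l : ℕ) (hl1 : ℓ ≤ l) (hl2 : l ≤ L)
    (w₁ w₂ : ℕ → Fin d → ℝ)
    (hw₁ : w₁ ∈ restrict L B) (hw₂ : w₂ ∈ restrict L B)
    (hmatch : ∀ j < l, w₁ (L - l + j) = w₂ j) :
    (fun k => if k < L then w₁ k else w₂ (k - (L - l))) ∈ restrict (2 * L - l) B := by
  obtain ⟨v₁, hv₁, hwv₁⟩ := hw₁
  obtain ⟨v₂, hv₂, hwv₂⟩ := hw₂
  have hvmatch : ∀ j < l, v₁ (L - l + j) = v₂ j := fun j hj => by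
    rw [← hwv₁ _ (by omega), ← hwv₂ _ (by omega), hmatch j hj]
  refine ⟨_, glue_mem_of_hasLagAtMost (Set.mapsTo_iff_image_subset.2 hshift.le) hlag hv₁ hv₂ hl1
    hvmatch, fun k hk => ?_⟩
  dsimp only
  rw [Nat.sub_add_cancel hl2]
  split_ifs with hkL
  · exact hwv₁ k hkL
  · exact hwv₂ _ (by omega)

/-- weaving lemma: if `B` is shift-invariant with lag at most `ℓ`,
`L > ℓ`, `ŵ₁, ŵ₂ ∈ B|_L`, `ℓ ≤ l ≤ L`, and the last `l` entries of `ŵ₁` coincide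
with the first `l` entries of `ŵ₂`, then the concatenation of `ŵ₁` with the last
`L − l` entries of `ŵ₂` belongs to `B|_{2L−l}`. -/
theorem weaving {d : ℕ} (B : Set (ℕ → Fin d → ℝ)) (ℓ : ℕ)
    (hshift : shift '' B = B) (hlag : hasLagAtMost B ℓ)
    (L l : ℕ) (hL : ℓ < L) (hl1 : ℓ ≤ l) (hl2 : l ≤ L)
    (w₁ w₂ : ℕ → Fin d → ℝ)
    (hw₁ : w₁ ∈ restrict L B) (hw₂ : w₂ ∈ restrict L B)
    (hmatch : ∀ j < l, w₁ (L - l + j) = w₂ j) :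
    (fun k => if k < L then w₁ k else w₂ (k - (L - l))) ∈ restrict (2 * L - l) B :=
  weaving_general B ℓ hshift hlag L l hl1 hl2 w₁ w₂ hw₁ hw₂ hmatch
end

section
/- Let B^i ⊆ (ℕ → ℝ^{d_i}) (i = 1,…,N) be behaviors with lag at most ℓ_i, and let B^Π ⊆ (ℕ → ℝ^{d_1} × ⋯ × ℝ^{d_N}) be a behavior with lag at most ℓ_Π. Then the interconnected behavior B = {w : w^i ∈ B^i for every i} ∩ B^Π has lag at most max{ℓ_Π, ℓ_1, …, ℓ_N}. -/
section Lag

variable {α β ι : Type*} {B C : Set (ℕ → α)} {ℓ ℓ' : ℕ}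

theorem restrict_mono {L : ℕ} (h : B ⊆ C) : restrict L B ⊆ restrict L C :=
  fun _ ⟨w, hw, hv⟩ => ⟨w, h hw, hv⟩

theorem restrict_subset_restrict_of_le {L L' : ℕ} (h : L ≤ L') :
    restrict L' B ⊆ restrict L B :=
  fun _ ⟨w, hw, hv⟩ => ⟨w, hw, fun k hk => hv k (hk.trans_le h)⟩

theorem hasLagAtMost.mono (hB : hasLagAtMost B ℓ) (h : ℓ ≤ ℓ') : hasLagAtMost B ℓ' :=
  fun w hw => hB w fun k => restrict_subset_restrict_of_le (by omega) (hw k)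

theorem hasLagAtMost.inter (hB : hasLagAtMost B ℓ) (hC : hasLagAtMost C ℓ) :
    hasLagAtMost (B ∩ C) ℓ :=
  fun w hw => ⟨hB w fun k => restrict_mono Set.inter_subset_left (hw k),
    hC w fun k => restrict_mono Set.inter_subset_right (hw k)⟩

theorem hasLagAtMost.iInter {B : ι → Set (ℕ → α)} (hB : ∀ i, hasLagAtMost (B i) ℓ) :
    hasLagAtMost (⋂ i, B i) ℓ :=
  fun w hw => Set.mem_iInter.2 fun i =>
    hB i w fun k => restrict_mono (Set.iInter_subset B i) (hw k)

theorem hasLagAtMost.preimage_comp_left {B : Set (ℕ → β)} (hB : hasLagAtMost B ℓ)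
    (f : α → β) : hasLagAtMost ((f ∘ ·) ⁻¹' B) ℓ := by
  intro w hw
  refine hB (f ∘ w) fun k => ?_
  obtain ⟨u, hu, hwu⟩ := hw k
  exact ⟨f ∘ u, hu, fun j hj => congrArg f (hwu j hj)⟩

end Lag

/-- the interconnected behavior
`B = {w : w^i ∈ B^i for every i} ∩ B^Π` has lag at most
`max{ℓ_Π, ℓ_1, …, ℓ_N}`. -/
theorem lag_of_interconnection {N : ℕ} (d : Fin N → ℕ)
    (Bi : ∀ i : Fin N, Set (ℕ → Fin (d i) → ℝ)) (ℓi : Fin N → ℕ)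
    (hBi : ∀ i, hasLagAtMost (Bi i) (ℓi i))
    (BPi : Set (ℕ → (i : Fin N) → Fin (d i) → ℝ)) (ℓPi : ℕ)
    (hBPi : hasLagAtMost BPi ℓPi) :
    hasLagAtMost
      ({w : ℕ → (i : Fin N) → Fin (d i) → ℝ | ∀ i : Fin N, (fun k => w k i) ∈ Bi i} ∩ BPi)
      (max ℓPi (Finset.univ.sup ℓi)) := by
  have hcomponents : {w : ℕ → (i : Fin N) → Fin (d i) → ℝ | ∀ i, (fun k => w k i) ∈ Bi i} =
      ⋂ i, ((fun x => x i) ∘ ·) ⁻¹' Bi i :=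
    Set.ofPred_forall _
  rw [hcomponents]
  refine .inter (.iInter fun i => ?_) (hBPi.mono (le_max_left _ _))
  exact ((hBi i).preimage_comp_left _).mono
    (le_max_of_le_right (Finset.le_sup (Finset.mem_univ i)))
end

section
/- A sequence s : ℕ → ℝ satisfies the dissipativity condition — for every k₀ ∈ ℕ there exists C ∈ ℝ such that −∑_{k=k₀}^{k₁} s(k) ≤ C for all k₁ ≥ k₀ — if and only if there exists a storage function V : ℕ → ℝ with V(k) ≥ 0 for all k ∈ ℕ and V(k) − V(k−1) ≤ s(k) for all k ≥ 1. -/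
/-!
Sums over `Icc k₀ k₁` and over `Ioc k₀ k₁` differ only by the term `s k₀`, so dissipativity says
that every map `k₁ ↦ -∑_{k₀ < k ≤ k₁} s k` is bounded above. A storage function telescopes to
`V k₁ - V k₀ ≤ ∑_{k₀ < k ≤ k₁} s k`, which with `V ≥ 0` bounds these maps by `V k₀`. Conversely,
the suprema `V k₀` of these maps (Willems' available storage) are a storage function: they are
nonnegative because the empty sum `k₁ = k₀` is among them, and splitting off the first term of
each sum gives `V (k + 1) ≤ s (k + 1) + V k`.
-/

open Finset

lemma exists_neg_sum_Icc_le_iff_bddAbove (s : ℕ → ℝ) (k₀ : ℕ) :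
    (∃ C : ℝ, ∀ k₁ : ℕ, k₀ ≤ k₁ → -(∑ k ∈ Icc k₀ k₁, s k) ≤ C) ↔
      BddAbove (Set.range fun k₁ ↦ -∑ k ∈ Ioc k₀ k₁, s k) := by
  constructor
  · rintro ⟨C, hC⟩
    refine ⟨max (C + s k₀) 0, ?_⟩
    rintro _ ⟨k₁, rfl⟩
    rcases le_or_gt k₀ k₁ with h | h
    · have := hC k₁ h
      rw [← sum_Ioc_add_eq_sum_Icc h] at this
      exact le_max_of_le_left (by linarith)
    · simp [Ioc_eq_empty_of_le h.le]
  · rintro ⟨B, hB⟩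
    refine ⟨B - s k₀, fun k₁ h ↦ ?_⟩
    have := hB ⟨k₁, rfl⟩
    rw [← sum_Ioc_add_eq_sum_Icc h]
    linarith

section Storage

variable {s V : ℕ → ℝ}

lemma sub_le_sum_Ioc_of_succ_sub_le (hV : ∀ k, V (k + 1) - V k ≤ s (k + 1)) {a b : ℕ}
    (hab : a ≤ b) : V b - V a ≤ ∑ k ∈ Ioc a b, s k := by
  induction b, hab using Nat.le_induction with
  | base => simp
  | succ b hab ih =>
    rw [sum_Ioc_succ_top hab]
    linarith [hV b]

lemma bddAbove_neg_sum_Ioc_of_storage (hV₀ : ∀ k, 0 ≤ V k)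
    (hV : ∀ k, V (k + 1) - V k ≤ s (k + 1)) (k₀ : ℕ) :
    BddAbove (Set.range fun k₁ ↦ -∑ k ∈ Ioc k₀ k₁, s k) := by
  refine ⟨V k₀, ?_⟩
  rintro _ ⟨k₁, rfl⟩
  rcases le_or_gt k₀ k₁ with h | h
  · linarith [sub_le_sum_Ioc_of_succ_sub_le hV h, hV₀ k₁]
  · simpa [Ioc_eq_empty_of_le h.le] using hV₀ k₀

end Storage

noncomputable def availableStorage (s : ℕ → ℝ) (k₀ : ℕ) : ℝ :=
  ⨆ k₁, -∑ k ∈ Ioc k₀ k₁, s k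

section AvailableStorage

variable {s : ℕ → ℝ} {k₀ : ℕ} (hs : BddAbove (Set.range fun k₁ ↦ -∑ k ∈ Ioc k₀ k₁, s k))
include hs

lemma availableStorage_nonneg : 0 ≤ availableStorage s k₀ := by
  simpa [availableStorage] using le_ciSup hs k₀

lemma availableStorage_succ_sub_le :
    availableStorage s (k₀ + 1) - availableStorage s k₀ ≤ s (k₀ + 1) := by
  rw [sub_le_iff_le_add', availableStorage]
  refine ciSup_le fun k₁ ↦ ?_
  have hle (k₂ : ℕ) : -∑ k ∈ Ioc k₀ k₂, s k ≤ availableStorage s k₀ := le_ciSup hs k₂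
  rcases le_or_gt (k₀ + 1) k₁ with h | h
  · have := hle k₁
    rw [← sum_Ioc_consecutive s k₀.le_succ h, Nat.Ioc_succ_singleton, sum_singleton] at this
    linarith
  · have := hle (k₀ + 1)
    rw [Nat.Ioc_succ_singleton, sum_singleton] at this
    rw [Ioc_eq_empty_of_le h.le, sum_empty]
    linarith

end AvailableStorage

/-- a supply rate `s : ℕ → ℝ` is dissipative (for every `k₀` the
extracted supply `−∑_{k=k₀}^{k₁} s(k)` is bounded above uniformly in `k₁ ≥ k₀`)
iff there exists a nonnegative storage function `V` with
`V(k) − V(k−1) ≤ s(k)` for all `k ≥ 1`. -/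
theorem dissipative_iff_storage (s : ℕ → ℝ) :
    (∀ k₀ : ℕ, ∃ C : ℝ, ∀ k₁ : ℕ, k₀ ≤ k₁ → -(∑ k ∈ Finset.Icc k₀ k₁, s k) ≤ C) ↔
      ∃ V : ℕ → ℝ, (∀ k, 0 ≤ V k) ∧ ∀ k, 1 ≤ k → V k - V (k - 1) ≤ s k := by
  simp_rw [exists_neg_sum_Icc_le_iff_bddAbove]
  constructor
  · intro hs
    refine ⟨availableStorage s, fun k ↦ availableStorage_nonneg (hs k), fun k hk ↦ ?_⟩
    obtain ⟨k, rfl⟩ := Nat.exists_eq_add_of_le' hk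
    exact availableStorage_succ_sub_le (hs k)
  · rintro ⟨V, hV₀, hV⟩
    exact bddAbove_neg_sum_Ioc_of_storage hV₀ fun k ↦ hV (k + 1) k.succ_pos
end

section
/- Let B ⊆ (ℕ → ℝ^d) be a behavior with σB ⊆ B. Let K_Φ, K_Ψ ∈ ℕ, set L⁻ = max(K_Φ, K_Ψ + 1), and let Φ̃ be a symmetric ((K_Φ+1)d) × ((K_Φ+1)d) real matrix and Ψ̃ a symmetric ((K_Ψ+1)d) × ((K_Ψ+1)d) real matrix. Define the padded matrices Φ̂ = diag(0_{(L⁻−K_Φ)d}, Φ̃), ∇Ψ̃ = diag(0_d, Ψ̃) − diag(Ψ̃, 0_d), and ∇Ψ̂ = diag(0_{(L⁻−K_Ψ−1)d}, ∇Ψ̃), all of size (L⁻+1)d × (L⁻+1)d. Suppose F is a real (L⁻+1)d × m matrix whose column span equals the set of stacked vectors {(w(0),…,w(L⁻)) : w ∈ B} ⊆ ℝ^{(L⁻+1)d}. If Ψ̃ is positive semidefinite and Fᵀ(Φ̂ − ∇Ψ̂)F is positive semidefinite, then for every w ∈ B and every k ≥ L⁻ one has Q_Ψ(w)(k) ≥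 0 and Q_Φ(w)(k) − (Q_Ψ(w)(k) − Q_Ψ(w)(k−1)) ≥ 0; that is, B is dissipative with supply rate Q_Φ(w) and nonnegative storage function Q_Ψ(w). -/
open Matrix

/-- Place a symmetric coefficient matrix of order `K` (size `(K+1)d`) into the
bottom-right corner of a matrix of order `L ≥ K` (size `(L+1)d`), padding with
zeros: this is `diag(0_{(L−K)d}, M)`. Vectors in `ℝ^{(L+1)d}` are encoded as
functions `Fin (L+1) × Fin d → ℝ` (block index, coordinate). -/
def padTop {d K L : ℕ} (h : K ≤ L)
    (M : Matrix (Fin (K + 1) × Fin d) (Fin (K + 1) × Fin d) ℝ) :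
    Matrix (Fin (L + 1) × Fin d) (Fin (L + 1) × Fin d) ℝ :=
  fun x y =>
    if hx : L - K ≤ (x.1 : ℕ) then
      if hy : L - K ≤ (y.1 : ℕ) then
        M (⟨(x.1 : ℕ) - (L - K), by have := x.1.isLt; omega⟩, x.2)
          (⟨(y.1 : ℕ) - (L - K), by have := y.1.isLt; omega⟩, y.2)
      else 0
    else 0

/-- Place a matrix of order `K` into the top-left corner of a matrix of order
`L ≥ K`, padding with zeros: this is `diag(M, 0_{(L−K)d})`. -/
def padBot {d K L : ℕ} (h : K ≤ L)
    (M : Matrix (Fin (K + 1) × Fin d) (Fin (K + 1) × Fin d) ℝ) :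
    Matrix (Fin (L + 1) × Fin d) (Fin (L + 1) × Fin d) ℝ :=
  fun x y =>
    if hx : (x.1 : ℕ) ≤ K then
      if hy : (y.1 : ℕ) ≤ K then
        M (⟨(x.1 : ℕ), by omega⟩, x.2) (⟨(y.1 : ℕ), by omega⟩, y.2)
      else 0
    else 0

/-- The quadratic difference form `Q_M(w)(k) = ŵᵀ M ŵ` where
`ŵ = (w(k−K),…,w(k))` is the stacked history vector (meaningful for `k ≥ K`). -/
def QdF {d K : ℕ} (M : Matrix (Fin (K + 1) × Fin d) (Fin (K + 1) × Fin d) ℝ)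
    (w : ℕ → Fin d → ℝ) (k : ℕ) : ℝ :=
  (fun p : Fin (K + 1) × Fin d => w (k - K + (p.1 : ℕ)) p.2) ⬝ᵥ
    M.mulVec (fun p : Fin (K + 1) × Fin d => w (k - K + (p.1 : ℕ)) p.2)

lemma sum_emb {α β : Type*} [Fintype α] [Fintype β] [DecidableEq β]
    (e : α ↪ β) (f : β → ℝ) (h0 : ∀ x, (∀ p, x ≠ e p) → f x = 0) :
    ∑ x, f x = ∑ p, f (e p) := by
  rw [← Finset.sum_map Finset.univ e f]
  exact (Finset.sum_subset (Finset.subset_univ _) (fun x _ hx =>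
    h0 x (fun p hp => hx (Finset.mem_map.mpr ⟨p, Finset.mem_univ p, hp.symm⟩)))).symm

lemma quad_reindex {d K L : ℕ}
    (e : Fin (K + 1) ↪ Fin (L + 1))
    (N : Matrix (Fin (L + 1) × Fin d) (Fin (L + 1) × Fin d) ℝ)
    (M : Matrix (Fin (K + 1) × Fin d) (Fin (K + 1) × Fin d) ℝ)
    (hz : ∀ x y : Fin (L + 1) × Fin d,
      ((∀ p, x.1 ≠ e p) ∨ (∀ q, y.1 ≠ e q)) → N x y = 0)
    (heq : ∀ (p q : Fin (K + 1)) (a b : Fin d), N (e p, a) (e q, b) = M (p, a) (q, b))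
    (v : Fin (L + 1) × Fin d → ℝ) :
    v ⬝ᵥ N.mulVec v =
      (fun p : Fin (K + 1) × Fin d => v (e p.1, p.2)) ⬝ᵥ
        M.mulVec (fun p : Fin (K + 1) × Fin d => v (e p.1, p.2)) := by
  classical
  have einj : Function.Injective
      (fun p : Fin (K+1) × Fin d => ((e p.1, p.2) : Fin (L+1) × Fin d)) := by
    intro p q h
    simp only [Prod.mk.injEq] at h
    exact Prod.ext (e.injective h.1) h.2
  set E : Fin (K + 1) × Fin d ↪ Fin (L + 1) × Fin d := ⟨fun p => (e p.1, p.2), einj⟩ with hE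
  have hrange : ∀ x : Fin (L+1) × Fin d, (∀ p, x ≠ E p) → (∀ p, x.1 ≠ e p) := by
    intro x hx p hp
    exact hx (p, x.2) (Prod.ext hp rfl)
  simp only [dotProduct, Matrix.mulVec, Finset.mul_sum]
  rw [sum_emb E _ (fun x hx => Finset.sum_eq_zero (fun y _ => by
    rw [hz x y (Or.inl (hrange x hx))]; ring))]
  refine Finset.sum_congr rfl (fun p _ => ?_)
  rw [sum_emb E _ (fun y hy => by
    rw [hz (E p) y (Or.inr (hrange y hy))]; ring)]
  refine Finset.sum_congr rfl (fun q _ => ?_)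
  show v (E p) * (N (E p) (E q) * v (E q)) = _
  rw [show N (E p) (E q) = M p q from by
    rcases p with ⟨p1, p2⟩; rcases q with ⟨q1, q2⟩; exact heq p1 q1 p2 q2]
  rfl

def eShift {K L : ℕ} (h : K ≤ L) : Fin (K + 1) ↪ Fin (L + 1) :=
  ⟨fun p => ⟨(p : ℕ) + (L - K), by have := p.isLt; omega⟩, by
    intro p q hpq
    have : (p : ℕ) + (L - K) = (q : ℕ) + (L - K) := congrArg Fin.val hpq
    exact Fin.ext (by omega)⟩

def eCast {K L : ℕ} (h : K + 1 ≤ L + 1) : Fin (K + 1) ↪ Fin (L + 1) :=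
  ⟨fun p => ⟨(p : ℕ), by have := p.isLt; omega⟩, by
    intro p q hpq
    simp only [Fin.mk.injEq] at hpq
    exact Fin.ext hpq⟩

lemma padTop_quad {d K L : ℕ} (h : K ≤ L)
    (M : Matrix (Fin (K + 1) × Fin d) (Fin (K + 1) × Fin d) ℝ)
    (v : Fin (L + 1) × Fin d → ℝ) :
    v ⬝ᵥ (padTop h M).mulVec v =
      (fun p : Fin (K + 1) × Fin d => v (eShift h p.1, p.2)) ⬝ᵥ
        M.mulVec (fun p : Fin (K + 1) × Fin d => v (eShift h p.1, p.2)) := by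
  apply quad_reindex
  · intro x y hxy
    unfold padTop
    rcases hxy with hx | hy
    · rw [dif_neg]
      intro hc
      exact hx ⟨(x.1 : ℕ) - (L - K), by have := x.1.isLt; omega⟩
        (Fin.ext (show (x.1 : ℕ) = (x.1 : ℕ) - (L - K) + (L - K) by omega))
    · rcases Nat.lt_or_ge (x.1 : ℕ) (L - K) with hx | hx
      · rw [dif_neg (by omega)]
      · rw [dif_pos hx, dif_neg]
        intro hc
        exact hy ⟨(y.1 : ℕ) - (L - K), by have := y.1.isLt; omega⟩
          (Fin.ext (show (y.1 : ℕ) = (y.1 : ℕ) - (L - K) + (L - K) by omega))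
  · intro p q a b
    unfold padTop eShift
    simp only [Function.Embedding.coeFn_mk]
    erw [dif_pos (show L - K ≤ (p : ℕ) + (L - K) by omega),
        dif_pos (show L - K ≤ (q : ℕ) + (L - K) by omega)]
    congr 1
    · exact Prod.ext (Fin.ext (show (p : ℕ) + (L - K) - (L - K) = (p : ℕ) by omega)) rfl
    · exact Prod.ext (Fin.ext (show (q : ℕ) + (L - K) - (L - K) = (q : ℕ) by omega)) rfl

lemma padBot_quad {d K L : ℕ} (h : K ≤ L)
    (M : Matrix (Fin (K + 1) × Fin d) (Fin (K + 1) × Fin d) ℝ)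
    (v : Fin (L + 1) × Fin d → ℝ) :
    v ⬝ᵥ (padBot h M).mulVec v =
      (fun p : Fin (K + 1) × Fin d => v (eCast (by omega) p.1, p.2)) ⬝ᵥ
        M.mulVec (fun p : Fin (K + 1) × Fin d => v (eCast (by omega) p.1, p.2)) := by
  apply quad_reindex
  · intro x y hxy
    unfold padBot
    rcases hxy with hx | hy
    · rw [dif_neg]
      intro hc
      exact hx ⟨(x.1 : ℕ), by omega⟩ (Fin.ext rfl)
    · rcases Nat.lt_or_ge (K : ℕ) (x.1 : ℕ) with hx | hx
      · rw [dif_neg (by omega)]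
      · rw [dif_pos (by omega), dif_neg]
        intro hc
        exact hy ⟨(y.1 : ℕ), by omega⟩ (Fin.ext rfl)
  · intro p q a b
    unfold padBot eCast
    simp only [Function.Embedding.coeFn_mk]
    erw [dif_pos (show (p : ℕ) ≤ K from by have := p.isLt; omega),
        dif_pos (show (q : ℕ) ≤ K from by have := q.isLt; omega)]
    rfl

lemma shift_pow_mem {d : ℕ} (B : Set (ℕ → Fin d → ℝ)) (hs : shift '' B ⊆ B) :
    ∀ n : ℕ, ∀ w ∈ B, (fun j => w (n + j)) ∈ B := by
  intro n
  induction n with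
  | zero => intro w hw; simpa using hw
  | succ n ih =>
    intro w hw
    have h2 : shift (fun j => w (n + j)) ∈ B := hs ⟨_, ih w hw, rfl⟩
    have he : (fun j => w (n + 1 + j)) = shift (fun j => w (n + j)) := by
      funext j
      show w (n + 1 + j) = w (n + (j + 1))
      rw [show n + 1 + j = n + (j + 1) from by omega]
    rw [he]; exact h2

/-- let `B` be a shift-invariant behavior, `L⁻ = max(K_Φ, K_Ψ+1)`,
`Φ̃`, `Ψ̃` symmetric coefficient matrices, `Φ̂ = diag(0, Φ̃)`,
`∇Ψ̃ = diag(0_d, Ψ̃) − diag(Ψ̃, 0_d)`, `∇Ψ̂ = diag(0, ∇Ψ̃)` the padded matrices of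
size `(L⁻+1)d`, and `F` a matrix whose column span equals the set of stacked
`(L⁻+1)`-step initial segments of `B`. If `Ψ̃ ⪰ 0` and `Fᵀ(Φ̂ − ∇Ψ̂)F ⪰ 0`, then
for every `w ∈ B` and every `k ≥ L⁻`, `Q_Ψ(w)(k) ≥ 0` and
`Q_Φ(w)(k) − (Q_Ψ(w)(k) − Q_Ψ(w)(k−1)) ≥ 0`. -/
theorem dissipativity_from_data {d KΦ KΨ m : ℕ}
    (B : Set (ℕ → Fin d → ℝ)) (hshift : shift '' B ⊆ B)
    (Φ : Matrix (Fin (KΦ + 1) × Fin d) (Fin (KΦ + 1) × Fin d) ℝ) (hΦ : Φ.IsSymm)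
    (Ψ : Matrix (Fin (KΨ + 1) × Fin d) (Fin (KΨ + 1) × Fin d) ℝ) (hΨ : Ψ.IsSymm)
    (F : Matrix (Fin (max KΦ (KΨ + 1) + 1) × Fin d) (Fin m) ℝ)
    (hF : Set.range F.mulVec =
      {v : Fin (max KΦ (KΨ + 1) + 1) × Fin d → ℝ |
        ∃ w ∈ B, ∀ p : Fin (max KΦ (KΨ + 1) + 1) × Fin d, v p = w (p.1 : ℕ) p.2})
    (hΨpsd : Ψ.PosSemidef)
    (hLMI : (Fᵀ *
        (padTop (le_max_left KΦ (KΨ + 1)) Φ -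
          padTop (le_max_right KΦ (KΨ + 1))
            (padTop (Nat.le_succ KΨ) Ψ - padBot (Nat.le_succ KΨ) Ψ)) *
        F).PosSemidef) :
    ∀ w ∈ B, ∀ k : ℕ, max KΦ (KΨ + 1) ≤ k →
      0 ≤ QdF Ψ w k ∧ 0 ≤ QdF Φ w k - (QdF Ψ w k - QdF Ψ w (k - 1)) := by
  intro w hw k hk
  have hKΦ : KΦ ≤ max KΦ (KΨ + 1) := le_max_left _ _
  have hKΨ : KΨ + 1 ≤ max KΦ (KΨ + 1) := le_max_right _ _
  constructor
  · have h := hΨpsd.dotProduct_mulVec_nonneg (fun p : Fin (KΨ + 1) × Fin d => w (k - KΨ + (p.1 : ℕ)) p.2)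
    simpa [QdF] using h
  · -- the stacked vector of the (k - L)-shifted trajectory
    set v : Fin (max KΦ (KΨ + 1) + 1) × Fin d → ℝ :=
      fun p => w (k - max KΦ (KΨ + 1) + (p.1 : ℕ)) p.2 with hvdef
    have hw' : (fun j => w (k - max KΦ (KΨ + 1) + j)) ∈ B :=
      shift_pow_mem B hshift (k - max KΦ (KΨ + 1)) w hw
    have hv : v ∈ Set.range F.mulVec := by
      rw [hF]
      exact ⟨_, hw', fun p => rfl⟩
    obtain ⟨u, hu⟩ := hv
    set A := (padTop (le_max_left KΦ (KΨ + 1)) Φ -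
          padTop (le_max_right KΦ (KΨ + 1))
            (padTop (Nat.le_succ KΨ) Ψ - padBot (Nat.le_succ KΨ) Ψ)) with hAdef
    have key : 0 ≤ v ⬝ᵥ A.mulVec v := by
      have h := hLMI.dotProduct_mulVec_nonneg u
      rw [star_trivial] at h
      rwa [Matrix.mul_assoc, ← Matrix.mulVec_mulVec, ← Matrix.mulVec_mulVec,
        Matrix.dotProduct_mulVec, Matrix.vecMul_transpose, hu] at h
    rw [hAdef, Matrix.sub_mulVec, dotProduct_sub] at key
    have hΦeq : v ⬝ᵥ (padTop (le_max_left KΦ (KΨ + 1)) Φ).mulVec v = QdF Φ w k := by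
      rw [padTop_quad]
      have hvec : (fun p : Fin (KΦ + 1) × Fin d =>
          v (eShift (le_max_left KΦ (KΨ + 1)) p.1, p.2)) =
          fun p : Fin (KΦ + 1) × Fin d => w (k - KΦ + (p.1 : ℕ)) p.2 := by
        funext p
        show w (k - max KΦ (KΨ + 1) + ((p.1 : ℕ) + (max KΦ (KΨ + 1) - KΦ))) p.2 = w (k - KΦ + (p.1 : ℕ)) p.2
        rw [show k - max KΦ (KΨ + 1) + ((p.1 : ℕ) + (max KΦ (KΨ + 1) - KΦ)) = k - KΦ + (p.1 : ℕ) by omega]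
      rw [hvec]; rfl
    have hΨeq : v ⬝ᵥ (padTop (le_max_right KΦ (KΨ + 1))
        (padTop (Nat.le_succ KΨ) Ψ - padBot (Nat.le_succ KΨ) Ψ)).mulVec v =
        QdF Ψ w k - QdF Ψ w (k - 1) := by
      rw [padTop_quad, Matrix.sub_mulVec, dotProduct_sub, padTop_quad, padBot_quad]
      have hvec1 : (fun p : Fin (KΨ + 1) × Fin d =>
          (fun q : Fin (KΨ + 1 + 1) × Fin d =>
            v (eShift (le_max_right KΦ (KΨ + 1)) q.1, q.2)) (eShift (Nat.le_succ KΨ) p.1, p.2)) =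
          fun p : Fin (KΨ + 1) × Fin d => w (k - KΨ + (p.1 : ℕ)) p.2 := by
        funext p
        show w (k - max KΦ (KΨ + 1) + (((p.1 : ℕ) + (KΨ + 1 - KΨ)) + (max KΦ (KΨ + 1) - (KΨ + 1)))) p.2 = _
        rw [show k - max KΦ (KΨ + 1) + (((p.1 : ℕ) + (KΨ + 1 - KΨ)) + (max KΦ (KΨ + 1) - (KΨ + 1))) = k - KΨ + (p.1 : ℕ) by omega]
      have hvec2 : (fun p : Fin (KΨ + 1) × Fin d =>
          (fun q : Fin (KΨ + 1 + 1) × Fin d =>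
            v (eShift (le_max_right KΦ (KΨ + 1)) q.1, q.2)) (eCast (by omega) p.1, p.2)) =
          fun p : Fin (KΨ + 1) × Fin d => w (k - 1 - KΨ + (p.1 : ℕ)) p.2 := by
        funext p
        show w (k - max KΦ (KΨ + 1) + ((p.1 : ℕ) + (max KΦ (KΨ + 1) - (KΨ + 1)))) p.2 = _
        rw [show k - max KΦ (KΨ + 1) + ((p.1 : ℕ) + (max KΦ (KΨ + 1) - (KΨ + 1))) = k - 1 - KΨ + (p.1 : ℕ) by omega]
      rw [hvec1, hvec2]; rfl
    rw [hΦeq, hΨeq] at key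
    exact key
end

section
/- Let Q be a symmetric n × n real matrix, S an n × m real matrix, R a symmetric m × m real matrix, and w₁ ∈ ℝⁿ; define f(w₂) = w₁ᵀQw₁ + 2 w₁ᵀS w₂ + w₂ᵀR w₂. If either (i) R is negative semidefinite and Sᵀw₁ is not in the range (column space) of R, or (ii) R is not negative semidefinite, then f is unbounded above: for every M ∈ ℝ there exists w₂ ∈ ℝᵐ with f(w₂) ≥ M. In particular there exists w₂ with f(w₂) ≥ 0, i.e. w₁ is free for the quadratic behavior. -/
open Matrix

lemma key_surj {m : ℕ} (R : Matrix (Fin m) (Fin m) ℝ) (hR : R.IsSymm) (b : Fin m → ℝ)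
    (hb : ¬ ∃ x, R.mulVec x = b) : ∃ v, R.mulVec v = 0 ∧ v ⬝ᵥ b ≠ 0 := by
  set T := Matrix.toEuclideanLin R with hT
  set K := LinearMap.range T with hK
  set b' : EuclideanSpace ℝ (Fin m) := (WithLp.equiv 2 (Fin m → ℝ)).symm b with hb'
  have hbK : b' ∉ K := by
    rintro ⟨x, hx⟩
    exact hb ⟨(WithLp.equiv 2 (Fin m → ℝ)) x, by
      have := congrArg (WithLp.equiv 2 (Fin m → ℝ)) hx
      simpa [hT, Matrix.toEuclideanLin_apply, hb'] using this⟩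
  set v : EuclideanSpace ℝ (Fin m) := b' - (K.orthogonalProjectionOnto b' : EuclideanSpace ℝ (Fin m)) with hv
  have hvK : v ∈ Kᗮ := K.sub_starProjection_mem_orthogonal b'
  have hvne : v ≠ 0 := by
    intro h
    apply hbK
    have : b' = (K.orthogonalProjectionOnto b' : EuclideanSpace ℝ (Fin m)) := by
      have := sub_eq_zero.mp (hv ▸ h)
      exact this
    rw [this]; exact SetLike.coe_mem _
  set v' : Fin m → ℝ := (WithLp.equiv 2 (Fin m → ℝ)) v with hv'
  have hRv : R.mulVec v' = 0 := by
    have hall : ∀ x : Fin m → ℝ, x ⬝ᵥ (Rᵀ.mulVec v') = 0 := by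
      intro x
      have hmem : T ((WithLp.equiv 2 (Fin m → ℝ)).symm x) ∈ K := LinearMap.mem_range_self _ _
      have h0 : inner ℝ (T ((WithLp.equiv 2 (Fin m → ℝ)).symm x)) v = (0 : ℝ) := hvK _ hmem
      have : (R.mulVec x) ⬝ᵥ v' = 0 := by
        simpa [hT, Matrix.toEuclideanLin_apply, PiLp.inner_apply, RCLike.inner_apply,
          dotProduct, mul_comm, hv'] using h0
      rw [dotProduct_mulVec, vecMul_transpose]
      simpa [dotProduct_comm] using this
    have := hall (Rᵀ.mulVec v')
    rw [dotProduct_self_eq_zero] at this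
    rw [← hR]; exact this
  refine ⟨v', hRv, ?_⟩
  have hinner : v' ⬝ᵥ b = inner ℝ v b' := by
    simp [PiLp.inner_apply, RCLike.inner_apply, dotProduct, hv', hb', mul_comm]
  rw [hinner]
  have hproj : inner ℝ v ((K.orthogonalProjectionOnto b' : EuclideanSpace ℝ (Fin m))) = (0:ℝ) := by
    have := hvK _ (SetLike.coe_mem (K.orthogonalProjectionOnto b'))
    rwa [real_inner_comm] at this
  have : (inner ℝ v b' : ℝ) = inner ℝ v v + inner ℝ v ((K.orthogonalProjectionOnto b' : EuclideanSpace ℝ (Fin m))) := by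
    rw [← inner_add_right]
    congr 1
    simp [hv]
  rw [this, hproj, add_zero]
  intro h
  exact hvne (inner_self_eq_zero.mp h)

/-- if either (i) `R ⪯ 0` and `Sᵀw₁` is not in the column space of
`R`, or (ii) `R` is not negative semidefinite, then
`f(w₂) = w₁ᵀQw₁ + 2w₁ᵀSw₂ + w₂ᵀRw₂` is unbounded above; in particular there
exists `w₂` with `f(w₂) ≥ 0`, i.e. `w₁` is free for the quadratic behavior. -/
theorem quadratic_unbounded_above {n m : ℕ}
    (Q : Matrix (Fin n) (Fin n) ℝ) (hQ : Q.IsSymm)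
    (R : Matrix (Fin m) (Fin m) ℝ) (hR : R.IsSymm)
    (S : Matrix (Fin n) (Fin m) ℝ) (w₁ : Fin n → ℝ)
    (hyp : ((∀ x : Fin m → ℝ, x ⬝ᵥ R.mulVec x ≤ 0) ∧
              ¬ ∃ x : Fin m → ℝ, R.mulVec x = Sᵀ.mulVec w₁) ∨
           ¬ (∀ x : Fin m → ℝ, x ⬝ᵥ R.mulVec x ≤ 0)) :
    let f : (Fin m → ℝ) → ℝ := fun w₂ =>
      w₁ ⬝ᵥ Q.mulVec w₁ + 2 * (w₁ ⬝ᵥ S.mulVec w₂) + w₂ ⬝ᵥ R.mulVec w₂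
    (∀ M : ℝ, ∃ w₂ : Fin m → ℝ, M ≤ f w₂) ∧ ∃ w₂ : Fin m → ℝ, 0 ≤ f w₂ := by
  intro f
  set c : ℝ := w₁ ⬝ᵥ Q.mulVec w₁ with hc
  have main : ∀ M : ℝ, ∃ w₂ : Fin m → ℝ, M ≤ f w₂ := by
    intro M
    rcases hyp with ⟨hnsd, hnr⟩ | hnr
    · obtain ⟨v, hv0, hvb⟩ := key_surj R hR _ hnr
      have ha : (w₁ ⬝ᵥ S.mulVec v : ℝ) = v ⬝ᵥ Sᵀ.mulVec w₁ := by
        rw [dotProduct_mulVec, ← mulVec_transpose, dotProduct_comm]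
      set a : ℝ := w₁ ⬝ᵥ S.mulVec v with haa
      have ha0 : a ≠ 0 := ha ▸ hvb
      refine ⟨((M - c) / (2 * a)) • v, ?_⟩
      set t : ℝ := (M - c) / (2 * a) with ht
      have hfv : f (t • v) = c + 2 * (t * a) + t * (t * (v ⬝ᵥ R.mulVec v)) := by
        simp [f, mulVec_smul, dotProduct_smul, smul_dotProduct, smul_eq_mul, haa]
        try ring
      rw [hfv, hv0]
      have : 2 * (t * a) = M - c := by
        rw [ht]; field_simp
      simp [this]
    · push_neg at hnr
      obtain ⟨x, hx⟩ := hnr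
      set p : ℝ := x ⬝ᵥ R.mulVec x with hp
      have hp0 : 0 < p := hx
      set a : ℝ := w₁ ⬝ᵥ S.mulVec x with haa
      set t : ℝ := (2 * |a| + |M - c| + p) / p with ht
      refine ⟨t • x, ?_⟩
      have hfv : f (t • x) = c + 2 * (t * a) + t * (t * p) := by
        simp [f, mulVec_smul, dotProduct_smul, smul_dotProduct, smul_eq_mul, haa, hp]
        try ring
      rw [hfv]
      have htp : t * p = 2 * |a| + |M - c| + p := by
        rw [ht]; field_simp
      have ht1 : 1 ≤ t := by
        rw [ht, le_div_iff₀ hp0, one_mul]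
        nlinarith [abs_nonneg a, abs_nonneg (M - c)]
      have ht0 : 0 < t := lt_of_lt_of_le one_pos ht1
      have ha2 : -|a| ≤ a := neg_abs_le a
      have hm : M - c ≤ |M - c| := le_abs_self _
      nlinarith [mul_le_mul_of_nonneg_left ha2 ht0.le,
        mul_le_mul_of_nonneg_right ht1 (abs_nonneg (M - c)),
        abs_nonneg a, abs_nonneg (M - c)]
  exact ⟨main, main 0⟩
end
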